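/- In the ergodic Palm setting with rate function $r$ satisfying $\sup_n n\,r(n) \le 1$ and $K_r = \inf_n n\,r(n) > 0$, suppose the stability condition $\mathbb{E}[\sigma] < K_r\,\mathbb{E}[\xi]$ holds and let $W^{K_r}$ be the unique a.s. finite solution of the Loynes equation $W\circ\theta = [W + \sigma - K_r\xi]^+$. Then any finite counting-measure solution $\mu^r$ of the stationarity equation $\mu\circ\theta = \Phi^r(\mu + \delta_\sigma, \xi)$ satisfies $\langle \mu^r, I\rangle \le W^{K_r}$ almost surely. -/

import Mathlib

open MeasureTheory Filter Topology

/-- The partial integral order `≼` on finite positive measures. -/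
def IntOrder (μ ν : Measure ℝ) : Prop :=
  ∀ f : ℝ → ℝ, Measurable f → Monotone f → (∀ x, 0 ≤ f x) → (∃ C, ∀ x, f x ≤ C) →
    ∫ x, f x ∂μ ≤ ∫ x, f x ∂ν

/-- The `i`-th smallest atom (1-based) of the finite counting measure represented by the
multiset `m`. -/
noncomputable def atom (m : Multiset ℝ) (i : ℕ) : ℝ :=
  (m.sort (· ≤ ·)).getD (i - 1) 0

/-- `γ_i^r(m, x)`. -/
noncomputable def gam (r : ℕ → ℝ) (m : Multiset ℝ) (x : ℝ) (i : ℕ) : ℝ :=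
  r (Multiset.card m - i + 1) *
    (x - ∑ j ∈ Finset.Icc 1 (i - 1),
      atom m j * (1 / r (Multiset.card m - j + 1) - 1 / r (Multiset.card m - j)))

open Classical in
/-- `i^r(m, x) = max {i ≤ N(m) : α_i(m) ≤ γ_i^r(m,x)}`, with `max ∅ = 0`. -/
noncomputable def irdx (r : ℕ → ℝ) (m : Multiset ℝ) (x : ℝ) : ℕ :=
  (((Finset.Icc 1 (Multiset.card m)).filter (fun i => atom m i ≤ gam r m x i)).max).unbotD 0

/-- `γ^r(m, x)`, the amount of attained service per customer by time `x`
(`0` for the empty profile). -/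
noncomputable def gammaStar (r : ℕ → ℝ) (m : Multiset ℝ) (x : ℝ) : ℝ :=
  if m = 0 then 0 else gam r m x (min (irdx r m x + 1) (Multiset.card m))

open Classical in
/-- The one-step processor-sharing map `Φ^r(·, x) = τ_{γ^r(·,x)}`. -/
noncomputable def PhiM (r : ℕ → ℝ) (m : Multiset ℝ) (x : ℝ) : Multiset ℝ :=
  (m.filter (fun a => gammaStar r m x < a)).map (fun a => a - gammaStar r m x)

/-- The counting measure associated to a multiset of atoms. -/
noncomputable def toMeas (m : Multiset ℝ) : Measure ℝ :=
  (m.map (fun a => (Measure.dirac a : Measure ℝ))).sum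

/-!
While `n ≥ 1` customers are present the server works at total rate `n r(n) ≥ K`, so between
arrivals it does at least `K ξ` units of work unless it empties: the workload `V = ⟨μ, I⟩` satisfies
`V ∘ θ ≤ [V + σ - K ξ]⁺`. Hence the excess `(V - W)⁺` does not increase along `θ` and, by
ergodicity, is a.s. a constant `c`. If `c > 0` then `W + σ - K ξ ≥ 0` a.s. (otherwise
`W ∘ θ = 0` and `V ∘ θ < c`), so `W ∘ θ - W = σ - K ξ` would have mean zero, contradicting
`E[σ] < K E[ξ]`.
-/

namespace Multiset

theorem sum_map_sub_filter_lt_add_sum_map_min (m : Multiset ℝ) (γ : ℝ) [DecidablePred (γ < ·)] :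
    ((m.filter (γ < ·)).map (· - γ)).sum + (m.map (min · γ)).sum = m.sum := by
  induction m using Multiset.induction_on with
  | empty => simp
  | cons a s ih =>
    by_cases h : γ < a
    · simp only [filter_cons_of_pos _ h, map_cons, sum_cons, min_eq_right h.le]
      linarith
    · simp only [filter_cons_of_neg _ h, map_cons, sum_cons, min_eq_left (not_lt.mp h)]
      linarith

end Multiset

section SortedAtoms

variable {m : Multiset ℝ}

theorem atom_eq_getElem {j : ℕ} (hj : j < Multiset.card m) :
    atom m (j + 1) = (m.sort (· ≤ ·))[j]'(by rwa [Multiset.length_sort]) := by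
  rw [atom, Nat.add_sub_cancel, List.getD_eq_getElem]

theorem atom_mem {j : ℕ} (h1 : 1 ≤ j) (h2 : j ≤ Multiset.card m) : atom m j ∈ m := by
  obtain ⟨j, rfl⟩ := Nat.exists_eq_add_of_le' h1
  rw [atom_eq_getElem (by omega), ← Multiset.mem_sort (· ≤ ·)]
  exact List.getElem_mem _

theorem atom_le_atom {j k : ℕ} (h1 : 1 ≤ j) (hjk : j ≤ k) (hk : k ≤ Multiset.card m) :
    atom m j ≤ atom m k := by
  obtain ⟨j, rfl⟩ := Nat.exists_eq_add_of_le' h1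
  obtain ⟨k, rfl⟩ := Nat.exists_eq_add_of_le' (h1.trans hjk)
  rw [atom_eq_getElem (by omega), atom_eq_getElem (by omega)]
  exact (Multiset.pairwise_sort m (· ≤ ·)).sortedLE.getElem_le_getElem_of_le (by omega)

theorem le_atom_card {b : ℝ} (hb : b ∈ m) : b ≤ atom m (Multiset.card m) := by
  rw [← Multiset.mem_sort (· ≤ ·), List.mem_iff_getElem] at hb
  obtain ⟨j, hj, rfl⟩ := hb
  rw [Multiset.length_sort] at hj
  rw [← atom_eq_getElem hj]
  exact atom_le_atom (by omega) (by omega) le_rfl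

theorem sum_map_eq_sum_atom (f : ℝ → ℝ) (m : Multiset ℝ) :
    (m.map f).sum = ∑ j ∈ Finset.Icc 1 (Multiset.card m), f (atom m j) := by
  conv_lhs => rw [← Multiset.sort_eq m (· ≤ ·)]
  rw [Multiset.map_coe, Multiset.sum_coe, ← Fin.sum_univ_fun_getElem,
    ← Finset.Ico_add_one_right_eq_Icc, Finset.sum_Ico_eq_sum_range, Nat.add_sub_cancel,
    ← Multiset.length_sort (· ≤ ·), Finset.sum_range]
  refine Fintype.sum_congr _ _ fun j => ?_
  rw [add_comm, atom_eq_getElem (by simpa [Multiset.length_sort] using j.2)]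

theorem sum_map_min_eq {γ : ℝ} {i : ℕ} (hi : i ≤ Multiset.card m)
    (hle : ∀ j ∈ Finset.Icc 1 i, atom m j ≤ γ)
    (hge : ∀ j ∈ Finset.Ioc i (Multiset.card m), γ ≤ atom m j) :
    (m.map (min · γ)).sum =
      ∑ j ∈ Finset.Icc 1 i, atom m j + ((Multiset.card m - i : ℕ) : ℝ) * γ := by
  have hsplit := Finset.sum_Ioc_consecutive (fun j => min (atom m j) γ) (Nat.zero_le i) hi
  rw [← Finset.Icc_add_one_left_eq_Ioc 0 i, ← Finset.Icc_add_one_left_eq_Ioc 0, zero_add] at hsplit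
  rw [sum_map_eq_sum_atom, ← hsplit, Finset.sum_congr rfl fun j hj => min_eq_left (hle j hj),
    Finset.sum_congr rfl fun j hj => min_eq_right (hge j hj), Finset.sum_const, Nat.card_Ioc,
    nsmul_eq_mul]

end SortedAtoms

namespace Finset

variable {s : Finset ℕ} {k : ℕ}

theorem le_max_unbotD (hk : k ∈ s) : k ≤ s.max.unbotD 0 := by
  obtain ⟨b, hb⟩ := Finset.max_of_mem hk
  rw [hb, WithBot.unbotD_coe]
  exact WithBot.coe_le_coe.mp (hb ▸ Finset.le_max hk)

theorem max_unbotD_mem (h : s.max.unbotD 0 ≠ 0) : s.max.unbotD 0 ∈ s := by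
  cases hs : s.max with
  | bot => simp [hs] at h
  | coe b => exact Finset.mem_of_max hs

end Finset

section ServiceIndex

variable {r : ℕ → ℝ} {m : Multiset ℝ} {x : ℝ}

theorem irdx_mem (h : irdx r m x ≠ 0) :
    irdx r m x ∈ Finset.Icc 1 (Multiset.card m) ∧ atom m (irdx r m x) ≤ gam r m x (irdx r m x) :=
  Finset.mem_filter.mp (Finset.max_unbotD_mem h)

theorem irdx_le_card : irdx r m x ≤ Multiset.card m := by
  by_cases h : irdx r m x = 0
  · omega
  · exact (Finset.mem_Icc.mp (irdx_mem h).1).2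

theorem le_irdx {k : ℕ} (h1 : 1 ≤ k) (h2 : k ≤ Multiset.card m) (hk : atom m k ≤ gam r m x k) :
    k ≤ irdx r m x :=
  Finset.le_max_unbotD (Finset.mem_filter.mpr ⟨Finset.mem_Icc.mpr ⟨h1, h2⟩, hk⟩)

end ServiceIndex

section ProcessorSharing

variable {r : ℕ → ℝ} {m : Multiset ℝ} {x K : ℝ}

-- `atom m 0 = atom m 1` because `0 - 1 = 0` in `ℕ`; the departure-time recursion needs `α₀ = 0`.
noncomputable def atom₀ (m : Multiset ℝ) (j : ℕ) : ℝ :=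
  if j = 0 then 0 else atom m j

theorem atom₀_of_pos {j : ℕ} (hj : 1 ≤ j) : atom₀ m j = atom m j :=
  if_neg (by omega)

theorem atom₀_le_atom₀ (hm0 : ∀ b ∈ m, 0 ≤ b) {j k : ℕ} (hjk : j ≤ k)
    (hk : k ≤ Multiset.card m) : atom₀ m j ≤ atom₀ m k := by
  rcases Nat.eq_zero_or_pos j with rfl | hj
  · rcases Nat.eq_zero_or_pos k with rfl | hk0
    · rfl
    · rw [atom₀_of_pos hk0]
      exact hm0 _ (atom_mem hk0 hk)
  · rw [atom₀_of_pos hj, atom₀_of_pos (hj.trans_le hjk)]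
    exact atom_le_atom hj hjk hk

/-- Under processor sharing with per-customer rate `r n` among `n` customers, the customer with
the `i`-th smallest requirement leaves at time `departureTime r m i`. -/
noncomputable def departureTime (r : ℕ → ℝ) (m : Multiset ℝ) (i : ℕ) : ℝ :=
  ∑ j ∈ Finset.range i, (atom₀ m (j + 1) - atom₀ m j) / r (Multiset.card m - j)

theorem departureTime_zero : departureTime r m 0 = 0 := Finset.sum_range_zero _

theorem departureTime_succ (i : ℕ) : departureTime r m (i + 1) =
    departureTime r m i + (atom₀ m (i + 1) - atom₀ m i) / r (Multiset.card m - i) :=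
  Finset.sum_range_succ _ _

theorem sum_atom_mul_inv_sub_inv {i : ℕ} (hi : i < Multiset.card m) :
    ∑ j ∈ Finset.Icc 1 i, atom m j *
        (1 / r (Multiset.card m - j + 1) - 1 / r (Multiset.card m - j)) =
      departureTime r m i - atom₀ m i / r (Multiset.card m - i) := by
  induction i with
  | zero => simp [departureTime, atom₀]
  | succ i ih =>
    rw [Finset.sum_Icc_succ_top (by omega), ih (by omega), departureTime_succ,
      atom₀_of_pos (Nat.le_add_left 1 i),
      show Multiset.card m - (i + 1) + 1 = Multiset.card m - i by omega]
    ring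

-- `γ_{i+1}` is the service `α_i + r(N - i) (x - t_i)` received by time `x` by each of the `N - i`
-- customers left after the `i`-th departure at time `t_i = departureTime r m i`.
theorem gam_succ {i : ℕ} (hi : i < Multiset.card m) (hr : r (Multiset.card m - i) ≠ 0) :
    gam r m x (i + 1) =
      r (Multiset.card m - i) * (x - departureTime r m i) + atom₀ m i := by
  rw [gam, Nat.add_sub_cancel, sum_atom_mul_inv_sub_inv hi,
    show Multiset.card m - (i + 1) + 1 = Multiset.card m - i by omega]
  field_simp
  ring

theorem pos_of_forall_le_mul (hK : 0 < K) (hKr : ∀ n : ℕ, 1 ≤ n → K ≤ n * r n) {n : ℕ}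
    (hn : 1 ≤ n) : 0 < r n :=
  pos_of_mul_pos_right (hK.trans_le (hKr n hn)) n.cast_nonneg

-- The right side is the work done by the time of the `i`-th departure, always at rate `n r n ≥ K`.
theorem mul_departureTime_le (hr : ∀ n : ℕ, 1 ≤ n → 0 < r n)
    (hKr : ∀ n : ℕ, 1 ≤ n → K ≤ n * r n) (hm0 : ∀ b ∈ m, 0 ≤ b) {i : ℕ}
    (hi : i ≤ Multiset.card m) :
    K * departureTime r m i ≤
      ∑ j ∈ Finset.Icc 1 i, atom m j + ((Multiset.card m - i : ℕ) : ℝ) * atom₀ m i := by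
  induction i with
  | zero => simp [departureTime_zero, atom₀]
  | succ i ih =>
    set N := Multiset.card m
    have hrate : K / r (N - i) ≤ ((N - i : ℕ) : ℝ) :=
      (div_le_iff₀ (hr _ (by omega))).mpr (hKr _ (by omega))
    have hstep : 0 ≤ atom₀ m (i + 1) - atom₀ m i :=
      sub_nonneg.mpr (atom₀_le_atom₀ hm0 (Nat.le_succ i) hi)
    have hcast : ((N - i : ℕ) : ℝ) = ((N - (i + 1) : ℕ) : ℝ) + 1 := by
      rw [← Nat.cast_add_one, show N - (i + 1) + 1 = N - i by omega]
    calc K * departureTime r m (i + 1)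
        = K * departureTime r m i + K / r (N - i) * (atom₀ m (i + 1) - atom₀ m i) := by
          rw [departureTime_succ]; ring
      _ ≤ ∑ j ∈ Finset.Icc 1 i, atom m j + ((N - i : ℕ) : ℝ) * atom₀ m i +
          ((N - i : ℕ) : ℝ) * (atom₀ m (i + 1) - atom₀ m i) :=
          add_le_add (ih (by omega)) (mul_le_mul_of_nonneg_right hrate hstep)
      _ = _ := by
          rw [Finset.sum_Icc_succ_top (by omega), ← atom₀_of_pos (Nat.le_add_left 1 i), hcast]
          ring

theorem departureTime_le_of_atom_le_gam (hr : ∀ n : ℕ, 1 ≤ n → 0 < r n) {i : ℕ} (hi1 : 1 ≤ i)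
    (hi : i ≤ Multiset.card m) (h : atom m i ≤ gam r m x i) : departureTime r m i ≤ x := by
  obtain ⟨i, rfl⟩ := Nat.exists_eq_add_of_le' hi1
  have hri := hr (Multiset.card m - i) (by omega)
  rw [gam_succ (by omega) hri.ne', ← atom₀_of_pos hi1] at h
  rw [departureTime_succ, ← le_sub_iff_add_le', div_le_iff₀ hri]
  linarith

theorem gammaStar_of_irdx_lt (hm : m ≠ 0) (hi : irdx r m x < Multiset.card m) :
    gammaStar r m x = gam r m x (irdx r m x + 1) := by
  rw [gammaStar, if_neg hm, min_eq_left hi]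

theorem PhiM_eq_zero_of_irdx_eq_card (hm : m ≠ 0) (hi : irdx r m x = Multiset.card m) :
    PhiM r m x = 0 := by
  have hγ : gammaStar r m x = gam r m x (Multiset.card m) := by
    rw [gammaStar, if_neg hm, hi, min_eq_right (Nat.le_succ _)]
  have hlast : atom m (Multiset.card m) ≤ gammaStar r m x := by
    rw [hγ, ← hi]
    exact (irdx_mem (hi ▸ Multiset.card_pos.mpr hm).ne').2
  rw [PhiM, Multiset.map_eq_zero, Multiset.filter_eq_nil]
  exact fun b hb => not_lt.mpr ((le_atom_card hb).trans hlast)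

theorem mul_le_sum_map_min_gammaStar (hr : ∀ n : ℕ, 1 ≤ n → 0 < r n)
    (hKr : ∀ n : ℕ, 1 ≤ n → K ≤ n * r n) (hm : m ≠ 0) (hm0 : ∀ b ∈ m, 0 ≤ b) (hx : 0 ≤ x)
    (hi : irdx r m x < Multiset.card m) :
    K * x ≤ (m.map (min · (gammaStar r m x))).sum := by
  set i := irdx r m x
  set N := Multiset.card m
  have hri := hr (N - i) (by omega)
  have hγ : gammaStar r m x = r (N - i) * (x - departureTime r m i) + atom₀ m i := by
    rw [gammaStar_of_irdx_lt hm hi, gam_succ hi hri.ne']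
  have hdep : departureTime r m i ≤ x := by
    rcases Nat.eq_zero_or_pos i with h0 | h0
    · rw [h0, departureTime_zero]
      exact hx
    · exact departureTime_le_of_atom_le_gam hr h0 hi.le (irdx_mem h0.ne').2
  have hserved : atom₀ m i ≤ gammaStar r m x := by
    rw [hγ]
    exact le_add_of_nonneg_left (mul_nonneg hri.le (sub_nonneg.mpr hdep))
  have hwaiting : gammaStar r m x < atom m (i + 1) := by
    by_contra! h
    have := le_irdx (by omega) hi (by rwa [← gammaStar_of_irdx_lt hm hi])
    omega
  have hbelow : ∀ j ∈ Finset.Icc 1 i, atom m j ≤ gammaStar r m x := fun j hj => by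
    obtain ⟨hj1, hji⟩ := Finset.mem_Icc.mp hj
    rw [← atom₀_of_pos hj1]
    exact (atom₀_le_atom₀ hm0 hji hi.le).trans hserved
  have habove : ∀ j ∈ Finset.Ioc i N, gammaStar r m x ≤ atom m j := fun j hj => by
    obtain ⟨hij, hjN⟩ := Finset.mem_Ioc.mp hj
    exact hwaiting.le.trans (atom_le_atom (by omega) hij hjN)
  rw [sum_map_min_eq hi.le hbelow habove]
  have hwork := mul_departureTime_le hr hKr hm0 hi.le
  have hrate := mul_le_mul_of_nonneg_right (hKr (N - i) (by omega)) (sub_nonneg.mpr hdep)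
  rw [hγ]
  linarith

theorem sum_PhiM_le (hK : 0 < K) (hKr : ∀ n : ℕ, 1 ≤ n → K ≤ n * r n) (hm : m ≠ 0)
    (hm0 : ∀ b ∈ m, 0 ≤ b) (hx : 0 ≤ x) : (PhiM r m x).sum ≤ max (m.sum - K * x) 0 := by
  rcases irdx_le_card.eq_or_lt with hi | hi
  · rw [PhiM_eq_zero_of_irdx_eq_card hm hi, Multiset.sum_zero]
    exact le_max_right _ _
  · have hsplit := m.sum_map_sub_filter_lt_add_sum_map_min (gammaStar r m x)
    have hserved :=
      mul_le_sum_map_min_gammaStar (fun _ => pos_of_forall_le_mul hK hKr) hKr hm hm0 hx hi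
    rw [← PhiM] at hsplit
    linarith [le_max_left (m.sum - K * x) 0]

end ProcessorSharing

theorem Ergodic.ae_eq_const_of_comp_ae_le {α : Type*} [MeasurableSpace α] {μ : Measure α}
    [IsFiniteMeasure μ] {f : α → α} {g : α → ℝ} (hf : Ergodic f μ) (hg : Measurable g)
    (hle : g ∘ f ≤ᵐ[μ] g) : ∃ c, g =ᵐ[μ] Function.const α c := by
  refine exists_eventuallyEq_const_of_forall_separating (· ∈ Set.range (Set.Iic : ℝ → Set ℝ)) ?_
  rintro _ ⟨c, rfl⟩
  have hsub : g ⁻¹' Set.Iic c ≤ᵐ[μ] f ⁻¹' (g ⁻¹' Set.Iic c) := by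
    filter_upwards [hle] with x hx hxc using hx.trans hxc
  rcases hf.ae_empty_or_univ_of_ae_le_preimage (hg measurableSet_Iic).nullMeasurableSet hsub
    with h | h
  · exact .inr (h.mono fun x hx => hx.mp)
  · exact .inl (h.mono fun x hx => hx.mpr trivial)

/-- `W` need not be integrable: by invariance `∫ min (W ∘ f) n = ∫ min W n`, and
`min (W ∘ f) n - min W n → s` under the domination `|s|`. -/
theorem MeasureTheory.MeasurePreserving.integral_eq_zero_of_comp_eq_add {α : Type*}
    [MeasurableSpace α] {μ : Measure α} [IsFiniteMeasure μ] {f : α → α}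
    (hf : MeasurePreserving f μ μ) {W s : α → ℝ} (hW : Measurable W) (hW0 : ∀ x, 0 ≤ W x)
    (hs : Integrable s μ) (h : ∀ᵐ x ∂μ, W (f x) = W x + s x) : ∫ x, s x ∂μ = 0 := by
  set T : ℕ → α → ℝ := fun n x => min (W x) n
  have hT : ∀ n, Measurable (T n) := fun n => hW.min measurable_const
  have hTint : ∀ n, Integrable (T n) μ := fun n =>
    (memLp_top_of_bound (hT n).aestronglyMeasurable n (ae_of_all _ fun x => by
      rw [Real.norm_of_nonneg (le_min (hW0 x) n.cast_nonneg)]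
      exact min_le_right _ _)).integrable le_top
  have hzero : ∀ n, ∫ x, T n (f x) - T n x ∂μ = 0 := fun n => by
    rw [integral_sub (f := fun x => T n (f x)) (hf.integrable_comp_of_integrable (hTint n))
      (hTint n), sub_eq_zero,
      ← integral_map hf.measurable.aemeasurable (hf.map_eq ▸ (hT n).aestronglyMeasurable),
      hf.map_eq]
  have hlim : Tendsto (fun n => ∫ x, T n (f x) - T n x ∂μ) atTop (𝓝 (∫ x, s x ∂μ)) := by
    refine tendsto_integral_of_dominated_convergence (fun x => |s x|)
      (fun n => ((hT n).comp hf.measurable |>.sub (hT n)).aestronglyMeasurable) hs.abs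
      (fun n => ?_) ?_
    · filter_upwards [h] with x hx
      simpa [T, hx] using abs_min_sub_min_le_max (W (f x)) (n : ℝ) (W x) n
    · filter_upwards [h] with x hx
      refine tendsto_const_nhds.congr' ?_
      filter_upwards [eventually_ge_atTop ⌈max (W (f x)) (W x)⌉₊] with n hn
      have hn' := Nat.ceil_le.mp hn
      simp only [T, min_eq_left ((le_max_left _ _).trans hn'),
        min_eq_left ((le_max_right _ _).trans hn'), hx]
      ring
  simp only [hzero] at hlim
  exact tendsto_nhds_unique hlim tendsto_const_nhds

theorem Ergodic.ae_le_of_loynes_subsolution {Ω : Type*} [MeasurableSpace Ω] {P : Measure Ω}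
    [IsFiniteMeasure P] {θ : Ω → Ω} (hθ : Ergodic θ P) {s W V : Ω → ℝ} (hs : Integrable s P)
    (hdrift : ∫ ω, s ω ∂P < 0) (hW : Measurable W) (hW0 : ∀ ω, 0 ≤ W ω)
    (hWeq : ∀ᵐ ω ∂P, W (θ ω) = max (W ω + s ω) 0) (hV : Measurable V)
    (hVle : ∀ᵐ ω ∂P, V (θ ω) ≤ max (V ω + s ω) 0) : ∀ᵐ ω ∂P, V ω ≤ W ω := by
  have hexcess : (fun ω => max (V ω - W ω) 0) ∘ θ ≤ᵐ[P] fun ω => max (V ω - W ω) 0 := by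
    filter_upwards [hVle, hWeq] with ω hVω hWω
    refine max_le ?_ (le_max_right _ _)
    calc V (θ ω) - W (θ ω) ≤ max (V ω + s ω) 0 - max (W ω + s ω) 0 := by linarith
      _ ≤ max (V ω + s ω - (W ω + s ω)) (0 - 0) := max_sub_max_le_max _ _ _ _
      _ = max (V ω - W ω) 0 := by ring_nf
  obtain ⟨c, hc⟩ := hθ.ae_eq_const_of_comp_ae_le ((hV.sub hW).max measurable_const) hexcess
  rcases le_or_gt c 0 with hc0 | hc0
  · filter_upwards [hc] with ω (hω : max (V ω - W ω) 0 = c)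
    linarith [le_max_left (V ω - W ω) 0]
  · have hgap : ∀ᵐ ω ∂P, V ω = W ω + c := by
      filter_upwards [hc] with ω (hω : max (V ω - W ω) 0 = c)
      rcases max_choice (V ω - W ω) 0 with h | h <;> rw [h] at hω <;> linarith
    have hlin : ∀ᵐ ω ∂P, W (θ ω) = W ω + s ω := by
      filter_upwards [hgap, hθ.toMeasurePreserving.quasiMeasurePreserving.ae hgap, hVle, hWeq]
        with ω hgapω hgapθω hVω hWω
      by_contra hne
      have hneg : W ω + s ω < 0 := by
        by_contra! hpos
        exact hne (hWω.trans (max_eq_left hpos))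
      rw [hgapθω, hWω, max_eq_right hneg.le, hgapω] at hVω
      exact absurd hVω (not_le.mpr (max_lt (by linarith) (by linarith)))
    have := hθ.toMeasurePreserving.integral_eq_zero_of_comp_eq_add hW hW0 hs hlin
    linarith

theorem stmt17_general {Ω : Type*} [MeasurableSpace Ω] (P : Measure Ω) [IsProbabilityMeasure P]
    (θ : Ω → Ω) (hθ : Ergodic θ P)
    (σ ξ : Ω → ℝ) (hσint : Integrable σ P) (hξint : Integrable ξ P)
    (hσ0 : ∀ ω, 0 ≤ σ ω) (hξ0 : ∀ ω, 0 < ξ ω)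
    (r : ℕ → ℝ)
    (K : ℝ) (hKpos : 0 < K)
    (hKglb : IsGLB {y : ℝ | ∃ n : ℕ, 1 ≤ n ∧ y = (n : ℝ) * r n} K)
    (hstab : ∫ ω, σ ω ∂P < K * ∫ ω, ξ ω ∂P)
    (W : Ω → ℝ) (hWmeas : Measurable W) (hW0 : ∀ ω, 0 ≤ W ω)
    (hWeq : ∀ᵐ ω ∂P, W (θ ω) = max (W ω + σ ω - K * ξ ω) 0)
    (μ : Ω → Multiset ℝ) (hμ0 : ∀ ω, ∀ a ∈ μ ω, (0:ℝ) ≤ a)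
    (hμmeas : Measurable fun ω => (μ ω).sum)
    (hμeq : ∀ᵐ ω ∂P, μ (θ ω) = PhiM r (σ ω ::ₘ μ ω) (ξ ω)) :
    ∀ᵐ ω ∂P, (μ ω).sum ≤ W ω := by
  have hKr : ∀ n : ℕ, 1 ≤ n → K ≤ n * r n := fun n hn => hKglb.1 ⟨n, hn, rfl⟩
  have hdrift : ∫ ω, σ ω - K * ξ ω ∂P < 0 := by
    rw [integral_sub hσint (hξint.const_mul K), integral_const_mul]
    linarith
  refine hθ.ae_le_of_loynes_subsolution (s := fun ω => σ ω - K * ξ ω)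
    (hσint.sub (hξint.const_mul K)) hdrift hWmeas hW0
    (by simpa only [add_sub_assoc] using hWeq) hμmeas ?_
  filter_upwards [hμeq] with ω hω
  have hatoms : ∀ b ∈ σ ω ::ₘ μ ω, 0 ≤ b := Multiset.forall_mem_cons.mpr ⟨hσ0 ω, hμ0 ω⟩
  calc (μ (θ ω)).sum ≤ max ((σ ω ::ₘ μ ω).sum - K * ξ ω) 0 :=
        hω ▸ sum_PhiM_le hKpos hKr Multiset.cons_ne_zero hatoms (hξ0 ω).le
    _ = max ((μ ω).sum + (σ ω - K * ξ ω)) 0 := by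
        rw [Multiset.sum_cons]
        ring_nf

/-- Any stationary service profile `μ^r` of the generalized processor-sharing queue
(with `sup_n n r(n) ≤ 1` and `K_r = inf_n n r(n) > 0`), under the stability condition
`E[σ] < K_r E[ξ]`, has workload dominated a.s. by the Loynes solution `W^{K_r}` of
`W ∘ θ = [W + σ - K_r ξ]⁺`. -/
theorem stmt17 {Ω : Type*} [MeasurableSpace Ω] (P : Measure Ω) [IsProbabilityMeasure P]
    (θ θinv : Ω → Ω) (hθ : Ergodic θ P) (hθinv : Measurable θinv)
    (hli : Function.LeftInverse θinv θ) (hri : Function.RightInverse θinv θ)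
    (σ ξ : Ω → ℝ) (hσint : Integrable σ P) (hξint : Integrable ξ P)
    (hσ0 : ∀ ω, 0 ≤ σ ω) (hξ0 : ∀ ω, 0 < ξ ω)
    (r : ℕ → ℝ) (hrmono : ∀ p q, 1 ≤ p → p ≤ q → r q ≤ r p)
    (hrsup : ∀ n : ℕ, 1 ≤ n → (n : ℝ) * r n ≤ 1)
    (K : ℝ) (hKpos : 0 < K)
    (hKglb : IsGLB {y : ℝ | ∃ n : ℕ, 1 ≤ n ∧ y = (n : ℝ) * r n} K)
    (hstab : ∫ ω, σ ω ∂P < K * ∫ ω, ξ ω ∂P)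
    (W : Ω → ℝ) (hWmeas : Measurable W) (hW0 : ∀ ω, 0 ≤ W ω)
    (hWeq : ∀ᵐ ω ∂P, W (θ ω) = max (W ω + σ ω - K * ξ ω) 0)
    (μ : Ω → Multiset ℝ) (hμ0 : ∀ ω, ∀ a ∈ μ ω, (0:ℝ) ≤ a)
    (hμmeas : Measurable fun ω => (μ ω).sum)
    (hμeq : ∀ᵐ ω ∂P, μ (θ ω) = PhiM r (σ ω ::ₘ μ ω) (ξ ω)) :
    ∀ᵐ ω ∂P, (μ ω).sum ≤ W ω :=
  stmt17_general P θ hθ σ ξ hσint hξint hσ0 hξ0 r K hKpos hKglb hstab W hWmeas hW0 hWeq μ hμ0 hμmeas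
    hμeq
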